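/- Fix 1 ≤ r ≤ n. An element y ∈ A satisfies y·M_{n,S} = 0 for every subset S ⊆ {1,…,n} of size r if and only if y ∈ ⊕_{s=n−r+1}^{n} N_s. -/

import Mathlib

set_option maxHeartbeats 1000000
set_option synthInstance.maxHeartbeats 400000

open scoped BigOperators

noncomputable section

/-- The polynomial part `F_p[x_1,…,x_m]`. -/
abbrev Rp (p m : ℕ) := MvPolynomial (Fin m) (ZMod p)

/-- The model `A = F_p[x_1,…,x_m] ⊗ Λ(a_1,…,a_m)` of the mod-`p` cohomology ring of an
elementary abelian `p`-group of rank `m`, realized as the exterior algebra over the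
polynomial ring `Rp p m` on the free module of rank `m`. -/
abbrev Ap (p m : ℕ) := ExteriorAlgebra (Rp p m) (Fin m → Rp p m)

/-- The degree-one exterior generators `a_i`. -/
def aa (p m : ℕ) (i : Fin m) : Ap p m := ExteriorAlgebra.ι (Rp p m) (Pi.single i 1)

/-- The degree-two polynomial generators `x_i`. -/
def xx (p m : ℕ) (i : Fin m) : Ap p m := algebraMap (Rp p m) (Ap p m) (MvPolynomial.X i)

/-- The ordered product `a_{i_1} ⋯ a_{i_r}` over a subset `S = {i_1 < ⋯ < i_r}`. -/
def aProd (p m : ℕ) (S : Finset (Fin m)) : Ap p m := ((S.sort (· ≤ ·)).map (aa p m)).prod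

/-- `N_r = F_p[x_1,…,x_m] ⊗ Λ^r`, the `Rp p m`-submodule of `Ap p m` spanned by the products
`a_{i_1} ⋯ a_{i_r}` with `i_1 < ⋯ < i_r`. -/
def Nsub (p m : ℕ) (r : ℕ) : Submodule (Rp p m) (Ap p m) :=
  Submodule.span (Rp p m) {z | ∃ S : Finset (Fin m), S.card = r ∧ z = aProd p m S}

/-- `a_φ = Σ_i φ_i a_i` for `φ ∈ F_p^m`. -/
def aphi (p m : ℕ) (φ : Fin m → ZMod p) : Ap p m :=
  ∑ i : Fin m, (MvPolynomial.C (φ i) : Rp p m) • aa p m i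

/-- `x_φ = Σ_i φ_i x_i` for `φ ∈ F_p^m`. -/
def xphi (p m : ℕ) (φ : Fin m → ZMod p) : Ap p m :=
  ∑ i : Fin m, (MvPolynomial.C (φ i) : Rp p m) • xx p m i

/-- The essential ideal `Ess(A) = ⋂_{φ ≠ 0} (a_φ, x_φ)`, the intersection over all nonzero
`φ ∈ F_p^m` of the two-sided ideals of `A` generated by `a_φ` and `x_φ`. -/
def Ess (p m : ℕ) : Set (Ap p m) :=
  ⋂ φ ∈ {φ : Fin m → ZMod p | φ ≠ 0},
    (TwoSidedIdeal.span {aphi p m φ, xphi p m φ} : Set (Ap p m))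

/-- The `m × m` Moore matrix with entries `C_{s,i} = x_i^{p^{s-1}}` (zero-based: row `s`
has entries `x_i^{p^s}`). -/
def moore (p m : ℕ) : Matrix (Fin m) (Fin m) (Rp p m) :=
  Matrix.of fun s i => (MvPolynomial.X i) ^ (p ^ (s : ℕ))

/-- `L_m = det C`, the Moore determinant. -/
def Ldet (p m : ℕ) : Rp p m := (moore p m).det

/-- `γ_{s,i}`: the determinant of the minor of the Moore matrix obtained by deleting
row `s` and column `i` (here the rank is `n+1`). -/
def gam (p n : ℕ) (s i : Fin (n + 1)) : Rp p (n + 1) :=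
  ((moore p (n + 1)).submatrix s.succAbove i.succAbove).det

/-- The Mùi invariant `M_{n,s} = Σ_i (-1)^{i+1} γ_{s,i} a_i` (zero-based sign `(-1)^i`). -/
def Mui (p n : ℕ) (s : Fin (n + 1)) : Ap p (n + 1) :=
  ∑ i : Fin (n + 1), (((-1) ^ (i : ℕ) * gam p n s i : Rp p (n + 1))) • aa p (n + 1) i

/-!
The Mùi invariants are the images `M_{n,s} = Λf(a_s)` of the exterior generators under the algebra
map induced by `f = adj(C) · diag((-1)^s)`, so `M_{n,S}` is `Λf(a_S)` up to a power of `L_n`.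
Since `f ∘ g = L_n • id` for `g = diag((-1)^s) · C` and `A` is torsion-free over the domain
`F_p[x_1,…,x_m]`, `y` annihilates every `Λf(a_S)` with `|S| = r` iff it annihilates every `a_T`
with `|T| = r`. With `m` the rank, that happens iff `y` has no `a_U`-component with `|U| ≤ m - r`:
for `T` of size `r` disjoint from `U`, the `a_{U ∪ T}`-coefficient of `y · a_T` is `±` the
`a_U`-coefficient of `y`, while `Λ^s · Λ^r ⊆ Λ^{s+r} = 0` once `s + r > m`.
-/

open Module Set.powersetCard Submodule

lemma mul_eq_zero_iff_of_smul_eq_smul {R A : Type*} [CommRing R] [IsDomain R] [Ring A]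
    [Algebra R A] [Module.IsTorsionFree R A] {c d : R} {u v : A} (huv : c • u = d • v)
    (hc : c ≠ 0) (hd : d ≠ 0) (y : A) : y * u = 0 ↔ y * v = 0 := by
  rw [← smul_eq_zero_iff_right hc, ← mul_smul_comm, huv, mul_smul_comm,
    smul_eq_zero_iff_right hd]

namespace ExteriorAlgebra

variable {R M I : Type*} [CommRing R] [AddCommGroup M] [Module R M]

instance [Module.Free R M] : Module.Free R (ExteriorAlgebra R M) :=
  letI := IsWellOrder.linearOrder (WellOrderingRel (α := Module.Free.ChooseBasisIndex R M))
  .of_basis (Module.Free.chooseBasis R M).ExteriorAlgebra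

section Functoriality

variable {N : Type*} [AddCommGroup N] [Module R N]

lemma map_mem_exteriorPower (f : M →ₗ[R] N) {n : ℕ} {z : ExteriorAlgebra R M}
    (hz : z ∈ ⋀[R]^n M) : map f z ∈ ⋀[R]^n N := by
  rw [← ιMulti_span_fixedDegree] at hz
  induction hz using Submodule.span_induction with
  | mem _ hv =>
    obtain ⟨v, rfl⟩ := hv
    rw [map_apply_ιMulti]
    exact ιMulti_range R n ⟨_, rfl⟩
  | zero => simp
  | add _ _ _ _ h₁ h₂ => rw [map_add]; exact add_mem h₁ h₂
  | smul c _ _ h => rw [map_smul]; exact smul_mem _ c h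

lemma map_smul_id_of_mem (c : R) {n : ℕ} {z : ExteriorAlgebra R M} (hz : z ∈ ⋀[R]^n M) :
    map (c • LinearMap.id) z = c ^ n • z := by
  rw [← ιMulti_span_fixedDegree] at hz
  refine LinearMap.eqOn_span' (f := (map (c • LinearMap.id)).toLinearMap)
    (g := c ^ n • LinearMap.id) ?_ hz
  rintro _ ⟨v, rfl⟩
  simp [map_apply_ιMulti, Function.comp_def, AlternatingMap.map_smul_univ]

end Functoriality

lemma exteriorPower_eq_span_basis [LinearOrder I] (b : Basis I R M) (n : ℕ) :
    ⋀[R]^n M = span R (b.ExteriorAlgebra '' {U | U.card = n}) := by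
  have hrange : b.ExteriorAlgebra '' {U | U.card = n} =
      (⋀[R]^n M).subtype '' Set.range (b.exteriorPower n) := by
    ext z
    simp only [Set.mem_image, Set.mem_ofPred_eq, Set.mem_range, exists_exists_eq_and,
      Submodule.subtype_apply, ← basis_eq_coe_basis]
    constructor
    · rintro ⟨U, rfl, rfl⟩
      exact ⟨ofCard rfl, rfl⟩
    · rintro ⟨s, rfl⟩
      exact ⟨s, Set.powersetCard.mem_iff.mp s.2, rfl⟩
  rw [hrange, ← Submodule.map_span, (b.exteriorPower n).span_eq, Submodule.map_top,
    Submodule.range_subtype]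

lemma exteriorPower_eq_bot [LinearOrder I] [Fintype I] (b : Basis I R M) {n : ℕ}
    (hn : Fintype.card I < n) : ⋀[R]^n M = ⊥ := by
  rw [exteriorPower_eq_span_basis b, Submodule.span_eq_bot]
  rintro _ ⟨U, rfl, -⟩
  exact absurd (Finset.card_le_univ U) (by omega)

section Basis

variable [LinearOrder I] (b : Basis I R M)

lemma basis_exteriorAlgebra_eq_prod (S : Finset I) :
    b.ExteriorAlgebra S = ((S.sort (· ≤ ·)).map fun i => ι R (b i)).prod := by
  rw [basis_apply_ofCard b rfl, ιMulti_family, ιMulti_apply, ofFinEmbEquiv_symm_apply,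
    ← S.listMap_orderEmbOfFin_finRange rfl, List.map_map, List.ofFn_eq_map]
  rfl

lemma forall_mem_exteriorPower_iff {N : Type*} [AddCommGroup N] [Module R N]
    (φ : ExteriorAlgebra R M →ₗ[R] N) (n : ℕ) :
    (∀ z ∈ ⋀[R]^n M, φ z = 0) ↔
      ∀ S : Finset I, S.card = n → φ (b.ExteriorAlgebra S) = 0 := by
  change ⋀[R]^n M ≤ LinearMap.ker φ ↔ _
  rw [exteriorPower_eq_span_basis b, span_le, Set.image_subset_iff]
  rfl

lemma mem_iSup_exteriorPower_iff (s : Finset ℕ) (y : ExteriorAlgebra R M) :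
    y ∈ ⨆ k ∈ s, ⋀[R]^k M ↔
      ∀ U : Finset I, U.card ∉ s → b.ExteriorAlgebra.repr y U = 0 := by
  have : ⨆ k ∈ s, ⋀[R]^k M = span R (b.ExteriorAlgebra '' {U | U.card ∈ s}) := by
    simp_rw [exteriorPower_eq_span_basis b, ← Submodule.span_iUnion₂, ← Set.image_iUnion₂]
    congr 2
    ext U
    simp
  rw [this, b.ExteriorAlgebra.mem_span_image, Set.subset_def]
  simp only [Finset.mem_coe, Finsupp.mem_support_iff, Set.mem_ofPred_eq]
  exact forall_congr' fun U => not_imp_comm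

lemma basis_mul_basis_of_disjoint {U T : Finset I} (h : Disjoint U T) :
    ∃ ε : ℤˣ,
      b.ExteriorAlgebra U * b.ExteriorAlgebra T = ε • b.ExteriorAlgebra (U ∪ T) := by
  refine ⟨(permOfDisjoint (s := ofCard (s := U) rfl) (t := ofCard (s := T) rfl) h).sign, ?_⟩
  rw [← Finset.disjUnion_eq_union _ _ h]
  exact basis_mul_of_disjoint b (ofCard rfl) (ofCard rfl) h

lemma basis_mul_basis_of_not_disjoint {U T : Finset I} (h : ¬Disjoint U T) :
    b.ExteriorAlgebra U * b.ExteriorAlgebra T = 0 :=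
  basis_mul_of_not_disjoint b (ofCard rfl) (ofCard rfl) h

lemma coord_union_comp_mulRight_basis {U T : Finset I} (hUT : Disjoint U T) :
    ∃ ε : ℤˣ, (b.ExteriorAlgebra.coord (U ∪ T)).comp
      (LinearMap.mulRight R (b.ExteriorAlgebra T)) = ε • b.ExteriorAlgebra.coord U := by
  obtain ⟨ε, hε⟩ := basis_mul_basis_of_disjoint b hUT
  refine ⟨ε, b.ExteriorAlgebra.ext fun V => ?_⟩
  simp only [LinearMap.comp_apply, LinearMap.mulRight_apply, LinearMap.smul_apply,
    Basis.coord_apply, Basis.repr_self]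
  by_cases hVT : Disjoint V T
  · obtain ⟨ε', hε'⟩ := basis_mul_basis_of_disjoint b hVT
    by_cases hVU : V = U
    · subst hVU
      simp [hε]
    · have : V ∪ T ≠ U ∪ T := fun h => hVU <| by
        rw [← Finset.union_sdiff_cancel_right hVT, h, Finset.union_sdiff_cancel_right hUT]
      simp [hε', this, hVU]
  · have hVU : V ≠ U := by rintro rfl; exact hVT hUT
    simp [basis_mul_basis_of_not_disjoint b hVT, hVU]

lemma repr_eq_zero_of_mul_basis_eq_zero {U T : Finset I} (hUT : Disjoint U T)
    {y : ExteriorAlgebra R M} (hy : y * b.ExteriorAlgebra T = 0) :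
    b.ExteriorAlgebra.repr y U = 0 := by
  obtain ⟨ε, hε⟩ := coord_union_comp_mulRight_basis b hUT
  have := LinearMap.congr_fun hε y
  simp only [LinearMap.comp_apply, LinearMap.mulRight_apply, hy, map_zero, LinearMap.smul_apply,
    Basis.coord_apply] at this
  exact (smul_eq_zero_iff_eq ε).mp this.symm

lemma forall_mul_basis_eq_zero_iff [Fintype I] {r : ℕ} (hr : r ≤ Fintype.card I)
    (y : ExteriorAlgebra R M) :
    (∀ T : Finset I, T.card = r → y * b.ExteriorAlgebra T = 0) ↔
      y ∈ ⨆ s ∈ Finset.Icc (Fintype.card I - r + 1) (Fintype.card I), ⋀[R]^s M := by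
  classical
  constructor
  · intro h
    rw [mem_iSup_exteriorPower_iff b]
    intro U hU
    have hUr : r ≤ Uᶜ.card := by
      have := U.card_le_univ
      rw [Finset.card_compl]
      rw [Finset.mem_Icc] at hU
      omega
    obtain ⟨T, hTU, rfl⟩ := Finset.exists_subset_card_eq hUr
    exact repr_eq_zero_of_mul_basis_eq_zero b
      (Finset.disjoint_of_subset_right hTU disjoint_compl_right) (h T rfl)
  · intro hy T hT
    have hbT : b.ExteriorAlgebra T ∈ ⋀[R]^r M := by
      rw [exteriorPower_eq_span_basis b]
      exact subset_span ⟨T, hT, rfl⟩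
    suffices ⨆ s ∈ Finset.Icc (Fintype.card I - r + 1) (Fintype.card I), ⋀[R]^s M ≤
        LinearMap.ker (LinearMap.mulRight R (b.ExteriorAlgebra T)) from this hy
    refine iSup₂_le fun s hs z hz => ?_
    rw [Finset.mem_Icc] at hs
    have hzT : z * b.ExteriorAlgebra T ∈ ⋀[R]^(s + r) M := SetLike.mul_mem_graded hz hbT
    rwa [exteriorPower_eq_bot b (by omega), Submodule.mem_bot] at hzT

lemma forall_mul_map_basis_eq_zero_iff [IsDomain R] {f g : M →ₗ[R] M} {c : R}
    (hfg : f ∘ₗ g = c • LinearMap.id) (hc : c ≠ 0) (r : ℕ) (y : ExteriorAlgebra R M) :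
    (∀ S : Finset I, S.card = r → y * map f (b.ExteriorAlgebra S) = 0) ↔
      ∀ S : Finset I, S.card = r → y * b.ExteriorAlgebra S = 0 := by
  have := Module.Free.of_basis b.ExteriorAlgebra
  refine ((forall_mem_exteriorPower_iff b
    (LinearMap.mulLeft R y ∘ₗ (map f).toLinearMap) r).symm.trans ?_).trans
    (forall_mem_exteriorPower_iff b (LinearMap.mulLeft R y) r)
  simp only [LinearMap.comp_apply, LinearMap.mulLeft_apply, AlgHom.toLinearMap_apply]
  refine ⟨fun h z hz => ?_, fun h z hz => h _ (map_mem_exteriorPower f hz)⟩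
  have hfgz : map f (map g z) = c ^ r • z := by
    rw [← AlgHom.comp_apply, map_comp_map, hfg, map_smul_id_of_mem c hz]
  rw [← smul_eq_zero_iff_right (pow_ne_zero r hc), ← mul_smul_comm, ← hfgz]
  exact h _ (map_mem_exteriorPower g hz)

end Basis

end ExteriorAlgebra

lemma aProd_eq_basisFun (p m : ℕ) (S : Finset (Fin m)) :
    aProd p m S = (Pi.basisFun (Rp p m) (Fin m)).ExteriorAlgebra S := by
  rw [ExteriorAlgebra.basis_exteriorAlgebra_eq_prod]
  simp only [Pi.basisFun_apply]
  rfl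

lemma Nsub_eq_exteriorPower (p m r : ℕ) : Nsub p m r = ⋀[Rp p m]^r (Fin m → Rp p m) := by
  rw [ExteriorAlgebra.exteriorPower_eq_span_basis (Pi.basisFun (Rp p m) (Fin m)), Nsub]
  congr 1
  ext z
  simp [aProd_eq_basisFun, eq_comm]

lemma prod_moore_perm_eq_monomial (p m : ℕ) (σ : Equiv.Perm (Fin m)) :
    ∏ i, moore p m (σ i) i =
      MvPolynomial.monomial (Finsupp.equivFunOnFinite.symm fun i => p ^ (σ i : ℕ)) 1 := by
  rw [MvPolynomial.monomial_eq, MvPolynomial.C_1, one_mul, Finsupp.prod_fintype _ _ (by simp)]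
  rfl

lemma Ldet_ne_zero (p m : ℕ) [Fact p.Prime] : Ldet p m ≠ 0 := by
  -- the diagonal monomial `∏ x_i ^ p ^ i` occurs only in the term of the identity permutation
  set d : Equiv.Perm (Fin m) → Fin m →₀ ℕ := fun σ =>
    Finsupp.equivFunOnFinite.symm fun i => p ^ (σ i : ℕ)
  have hd : Function.Injective d := fun σ τ h => Equiv.ext fun i => Fin.ext <|
    Nat.pow_right_injective (Fact.out : p.Prime).two_le (congrArg (· i) h :)
  have hcoeff : (Ldet p m).coeff (d 1) = 1 := by
    simp_rw [Ldet, Matrix.det_apply, MvPolynomial.coeff_sum, prod_moore_perm_eq_monomial,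
      Units.smul_def]
    change ∑ σ, ((Equiv.Perm.sign σ : ℤ) • MvPolynomial.monomial (d σ) 1).coeff (d 1) = 1
    rw [Finset.sum_eq_single_of_mem 1 (Finset.mem_univ _) fun σ _ hσ => ?_]
    · simp
    · rw [MvPolynomial.coeff_smul, MvPolynomial.coeff_monomial, if_neg (hd.ne hσ), smul_zero]
  intro h
  simp [h] at hcoeff

def altSigns (p n : ℕ) : Matrix (Fin (n + 1)) (Fin (n + 1)) (Rp p (n + 1)) :=
  Matrix.diagonal fun s => (-1) ^ (s : ℕ)

lemma altSigns_mul_self (p n : ℕ) : altSigns p n * altSigns p n = 1 := by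
  simp [altSigns, Matrix.diagonal_mul_diagonal, ← mul_pow]

def muiMatrix (p n : ℕ) : Matrix (Fin (n + 1)) (Fin (n + 1)) (Rp p (n + 1)) :=
  (moore p (n + 1)).adjugate * altSigns p n

lemma Mui_eq_map (p n : ℕ) (s : Fin (n + 1)) :
    Mui p n s = ExteriorAlgebra.map (Matrix.toLin' (muiMatrix p n)) (aa p (n + 1) s) := by
  rw [aa, ExteriorAlgebra.map_apply_ι, Matrix.toLin'_apply, Matrix.mulVec_single_one,
    ← (Pi.basisFun (Rp p (n + 1)) (Fin (n + 1))).sum_repr (Matrix.col _ s), map_sum, Mui]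
  refine Finset.sum_congr rfl fun i _ => ?_
  -- `adj(C)_{i,s} = (-1)^(s+i) γ_{s,i}`, and the column sign `(-1)^s` cancels `(-1)^s`
  rw [map_smul, Pi.basisFun_repr, Matrix.col_apply, muiMatrix, altSigns, Matrix.mul_diagonal,
    Matrix.adjugate_fin_succ_eq_det_submatrix, pow_add, Pi.basisFun_apply, aa, gam]
  have hsq : ((-1 : Rp p (n + 1)) ^ (s : ℕ)) * (-1) ^ (s : ℕ) = 1 := by
    rw [← mul_pow, neg_one_mul, neg_neg, one_pow]
  congr 1
  linear_combination
    (-(-1) ^ (i : ℕ) * ((moore p (n + 1)).submatrix s.succAbove i.succAbove).det) * hsq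

lemma toLin'_muiMatrix_comp (p n : ℕ) :
    Matrix.toLin' (muiMatrix p n) ∘ₗ Matrix.toLin' (altSigns p n * moore p (n + 1)) =
      Ldet p (n + 1) • LinearMap.id := by
  rw [← Matrix.toLin'_mul, muiMatrix, Matrix.mul_assoc, ← Matrix.mul_assoc (altSigns p n),
    altSigns_mul_self, Matrix.one_mul, Matrix.adjugate_mul, map_smul, Matrix.toLin'_one, Ldet]

lemma prod_Mui_eq_map (p n : ℕ) (S : Finset (Fin (n + 1))) :
    ((S.sort (· ≤ ·)).map (Mui p n)).prod =
      ExteriorAlgebra.map (Matrix.toLin' (muiMatrix p n)) (aProd p (n + 1) S) := by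
  rw [aProd, map_list_prod, List.map_map]
  exact congrArg _ (List.map_congr_left fun s _ => Mui_eq_map p n s)

theorem joint_annihilator_MuiSet_general (p n : ℕ) [Fact p.Prime]
    (MS : Finset (Fin (n + 1)) → Ap p (n + 1))
    (hMS : ∀ S : Finset (Fin (n + 1)),
      (Ldet p (n + 1)) ^ S.card • MS S =
        (Ldet p (n + 1)) • ((S.sort (· ≤ ·)).map (Mui p n)).prod)
    (r : ℕ) (hr2 : r ≤ n + 1) (y : Ap p (n + 1)) :
    (∀ S : Finset (Fin (n + 1)), S.card = r → y * MS S = 0) ↔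
      y ∈ ⨆ s ∈ Finset.Icc (n + 1 - r + 1) (n + 1), Nsub p (n + 1) s := by
  have hL := Ldet_ne_zero p (n + 1)
  let b := Pi.basisFun (Rp p (n + 1)) (Fin (n + 1))
  calc (∀ S : Finset (Fin (n + 1)), S.card = r → y * MS S = 0)
      ↔ ∀ S : Finset (Fin (n + 1)), S.card = r →
          y * ExteriorAlgebra.map (Matrix.toLin' (muiMatrix p n)) (b.ExteriorAlgebra S) = 0 := by
        refine forall₂_congr fun S _ => ?_
        rw [← aProd_eq_basisFun, ← prod_Mui_eq_map]
        exact mul_eq_zero_iff_of_smul_eq_smul (hMS S) (pow_ne_zero _ hL) hL y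
    _ ↔ ∀ S : Finset (Fin (n + 1)), S.card = r → y * b.ExteriorAlgebra S = 0 :=
        ExteriorAlgebra.forall_mul_map_basis_eq_zero_iff b (toLin'_muiMatrix_comp p n) hL r y
    _ ↔ y ∈ ⨆ s ∈ Finset.Icc (n + 1 - r + 1) (n + 1), Nsub p (n + 1) s := by
        simpa [Nsub_eq_exteriorPower] using
          ExteriorAlgebra.forall_mul_basis_eq_zero_iff b (by simpa using hr2) y

/-- Fix `1 ≤ r ≤ n`. Then `y·M_{n,S} = 0` for every subset `S` of size `r`
if and only if `y ∈ ⊕_{s=n-r+1}^n N_s` (the rank here is `n+1`). -/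
theorem joint_annihilator_MuiSet (p n : ℕ) [Fact p.Prime] (hodd : Odd p)
    (MS : Finset (Fin (n + 1)) → Ap p (n + 1))
    (hMS : ∀ S : Finset (Fin (n + 1)),
      (Ldet p (n + 1)) ^ S.card • MS S =
        (Ldet p (n + 1)) • ((S.sort (· ≤ ·)).map (Mui p n)).prod)
    (r : ℕ) (hr1 : 1 ≤ r) (hr2 : r ≤ n + 1) (y : Ap p (n + 1)) :
    (∀ S : Finset (Fin (n + 1)), S.card = r → y * MS S = 0) ↔
      y ∈ ⨆ s ∈ Finset.Icc (n + 1 - r + 1) (n + 1), Nsub p (n + 1) s :=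
  joint_annihilator_MuiSet_general p n MS hMS r hr2 y
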